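/- Let α, β, θ > 0 and let ν > 0 satisfy c := 2πν/θ² ≥ 1. Then ∬_{ℝ²} max(0, ν − (θ²/(2π))·exp(t²/α² + ω²/β²)) dt dω = (αβ/2)·θ²·(c·ln c − c + 1). -/

import Mathlib

/-!
The substitution `(t, ω) ↦ (t/α, ω/β)` (Jacobian `αβ`) makes the integrand a function of
`t² + ω²`, and polar coordinates followed by `s = r²` turn `∫_{ℝ²} g(t² + ω²)` into
`π ∫_0^∞ g(s) ds`. With `A = θ²/(2π)` the positive part of `ν - A eˢ` lives on `[0, log (ν/A)]`,
where it integrates to `ν log (ν/A) - ν + A = A (c log c - c + 1)`.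
-/

open Real MeasureTheory Set

section

variable {E : Type*} [NormedAddCommGroup E] [NormedSpace ℝ E]

theorem integral_comp_div_prodMap_div (f : ℝ × ℝ → E) {a b : ℝ} (ha : a ≠ 0) (hb : b ≠ 0) :
    ∫ p : ℝ × ℝ, f (p.1 / a, p.2 / b) = |a * b| • ∫ p, f p := by
  let e : ℝ × ℝ ≃ᵐ ℝ × ℝ :=
    (MeasurableEquiv.mulRight₀ a⁻¹ (inv_ne_zero ha)).prodCongr
      (MeasurableEquiv.mulRight₀ b⁻¹ (inv_ne_zero hb))
  have hmap : Measure.map e volume = ENNReal.ofReal |a * b| • (volume : Measure (ℝ × ℝ)) := by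
    rw [Measure.volume_eq_prod, show ⇑e = Prod.map (· * a⁻¹) (· * b⁻¹) from rfl,
      ← Measure.map_prod_map _ _ (measurable_mul_const _) (measurable_mul_const _),
      Real.map_volume_mul_right (inv_ne_zero ha), Real.map_volume_mul_right (inv_ne_zero hb),
      Measure.prod_smul_left, Measure.prod_smul_right, smul_smul,
      ← ENNReal.ofReal_mul (abs_nonneg _), ← abs_mul, inv_inv, inv_inv]
  calc ∫ p : ℝ × ℝ, f (p.1 / a, p.2 / b) = ∫ p, f (e p) := rfl
    _ = ∫ q, f q ∂(Measure.map e volume) := (integral_map_equiv e f).symm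
    _ = |a * b| • ∫ p, f p := by
      rw [hmap, integral_smul_measure, ENNReal.toReal_ofReal (abs_nonneg _)]

theorem integral_Ioi_smul_comp_sq (g : ℝ → E) :
    ∫ r in Ioi 0, r • g (r ^ 2) = (2 : ℝ)⁻¹ • ∫ s in Ioi 0, g s := by
  rw [← integral_comp_rpow_Ioi g two_ne_zero, ← integral_smul]
  refine setIntegral_congr_fun measurableSet_Ioi fun r _ => ?_
  rw [smul_smul, show (2 : ℝ) - 1 = 1 by norm_num, rpow_one, rpow_two, abs_two,
    inv_mul_cancel_left₀ two_ne_zero]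

theorem integral_comp_sq_add_sq (g : ℝ → E) :
    ∫ p : ℝ × ℝ, g (p.1 ^ 2 + p.2 ^ 2) = π • ∫ s in Ioi 0, g s := by
  have hsq (p : ℝ × ℝ) : (polarCoord.symm p).1 ^ 2 + (polarCoord.symm p).2 ^ 2 = p.1 ^ 2 := by
    simp only [polarCoord_symm_apply]
    linear_combination p.1 ^ 2 * cos_sq_add_sin_sq p.2
  rw [← integral_comp_polarCoord_symm]
  simp_rw [hsq]
  rw [polarCoord_target, Measure.volume_eq_prod, ← Measure.prod_restrict,
    integral_fun_fst fun r => r • g (r ^ 2), integral_Ioi_smul_comp_sq, smul_smul,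
    measureReal_restrict_apply_univ, Real.volume_real_Ioo_of_le (by linarith [pi_pos])]
  congr 1
  ring

end

theorem integral_Ioi_max_zero_sub_mul_exp {A ν : ℝ} (hA : 0 < A) (hAν : A ≤ ν) :
    ∫ s in Ioi 0, max 0 (ν - A * exp s) = ν * log (ν / A) - ν + A := by
  set L := log (ν / A)
  have hL : 0 ≤ L := log_nonneg ((one_le_div hA).2 hAν)
  have hexpL : A * exp L = ν := by
    rw [exp_log (div_pos (hA.trans_le hAν) hA), mul_div_cancel₀ _ hA.ne']
  rw [setIntegral_eq_of_subset_of_forall_sdiff_eq_zero measurableSet_Ioi Ioc_subset_Ioi_self,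
    ← intervalIntegral.integral_of_le hL]
  · calc ∫ s in (0)..L, max 0 (ν - A * exp s) = ∫ s in (0)..L, (ν - A * exp s) := by
          refine intervalIntegral.integral_congr fun s hs => max_eq_right ?_
          rw [sub_nonneg, ← hexpL]
          gcongr
          exact (uIcc_of_le hL ▸ hs).2
      _ = ν * L - ν + A := by
          rw [intervalIntegral.integral_sub intervalIntegrable_const
              ((continuous_exp.intervalIntegrable 0 L).const_mul A),
            intervalIntegral.integral_const_mul, integral_exp, intervalIntegral.integral_const,
            exp_zero, mul_sub, hexpL, sub_zero, smul_eq_mul]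
          ring
  · rintro s ⟨hs0, hsL⟩
    have hLs : L < s := lt_of_not_ge fun h => hsL ⟨hs0, h⟩
    refine max_eq_left (sub_nonpos.2 ?_)
    rw [← hexpL]
    gcongr

theorem tf_waterfilling_energy_integral_general (α β θ ν : ℝ) (hα : 0 < α) (hβ : 0 < β)
    (hθ : 0 < θ) (hc : 1 ≤ 2 * π * ν / θ ^ 2) :
    ∫ p : ℝ × ℝ, max 0 (ν - (θ ^ 2 / (2 * π)) * Real.exp (p.1 ^ 2 / α ^ 2 + p.2 ^ 2 / β ^ 2)) =
      (α * β / 2) * θ ^ 2 *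
        ((2 * π * ν / θ ^ 2) * Real.log (2 * π * ν / θ ^ 2) - 2 * π * ν / θ ^ 2 + 1) := by
  set A := θ ^ 2 / (2 * π) with hA_def
  have hA : 0 < A := by positivity
  have hθA : θ ^ 2 = 2 * π * A := by rw [hA_def]; field_simp
  have hc_eq : 2 * π * ν / θ ^ 2 = ν / A := by
    rw [hθA, mul_div_mul_left _ _ (by positivity)]
  have hAν : A ≤ ν := by rwa [hc_eq, one_le_div hA] at hc
  calc ∫ p : ℝ × ℝ, max 0 (ν - A * exp (p.1 ^ 2 / α ^ 2 + p.2 ^ 2 / β ^ 2))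
      = ∫ p : ℝ × ℝ, max 0 (ν - A * exp ((p.1 / α) ^ 2 + (p.2 / β) ^ 2)) := by
        simp_rw [div_pow]
    _ = α * β * π * (ν * log (ν / A) - ν + A) := by
      rw [integral_comp_div_prodMap_div (fun q => max 0 (ν - A * exp (q.1 ^ 2 + q.2 ^ 2)))
          hα.ne' hβ.ne', integral_comp_sq_add_sq fun s => max 0 (ν - A * exp s),
        integral_Ioi_max_zero_sub_mul_exp hA hAν, abs_of_pos (mul_pos hα hβ), smul_eq_mul,
        smul_eq_mul]
      ring
    _ = _ := by
      rw [hc_eq, hθA]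
      field_simp

/-- Closed-form evaluation of the time–frequency water-filling energy integral of Theorem 2 of
the paper: with `c = 2πν/θ² ≥ 1`,
`∬_{ℝ²} (ν − (θ²/(2π))·exp(t²/α² + ω²/β²))⁺ dt dω = (αβ/2)·θ²·(c·ln c − c + 1)`. -/
theorem tf_waterfilling_energy_integral (α β θ ν : ℝ) (hα : 0 < α) (hβ : 0 < β)
    (hθ : 0 < θ) (hν : 0 < ν) (hc : 1 ≤ 2 * π * ν / θ ^ 2) :
    ∫ p : ℝ × ℝ, max 0 (ν - (θ ^ 2 / (2 * π)) * Real.exp (p.1 ^ 2 / α ^ 2 + p.2 ^ 2 / β ^ 2)) =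
      (α * β / 2) * θ ^ 2 *
        ((2 * π * ν / θ ^ 2) * Real.log (2 * π * ν / θ ^ 2) - 2 * π * ν / θ ^ 2 + 1) :=
  tf_waterfilling_energy_integral_general α β θ ν hα hβ hθ hc
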